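/- Per-step interior-point cost update bound: in a finite discounted MDP, let δ > 0, t > 0, let C : S → A → ℝ be a cost signal, and let π, π' be policies with (π s a = 0 → π' s a = 0) such that D̄_KL(π'‖π) ≤ δ and 𝔸_C(π,π') ≤ 1/t (as holds when π' is a 1/t-suboptimal solution of the trust-region cost-minimization subproblem via the interior-point method). Then J_C(π') − J_C(π) ≤ 1/((1−γ)·t) + √(2δ) · γ · ε_C(π,π') / (1−γ)². -/

import Mathlib

open Real BigOperators

/-- Induced transition matrix of policy `pol`: `P_pol(s,s') = ∑ a, pol s a * P s a s'`. -/
noncomputable def transMat {S A : Type*} [Fintype A] (P : S → A → S → ℝ)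
    (pol : S → A → ℝ) : Matrix S S ℝ :=
  fun s s' => ∑ a, pol s a * P s a s'

/-- Discounted state visitation distribution
`d_pol(s) = (1-γ) ∑ₜ γ^t ∑_{s0} ρ0 s0 * (P_pol^t)(s0,s)`. -/
noncomputable def dVisit {S A : Type*} [Fintype S] [DecidableEq S] [Fintype A]
    (P : S → A → S → ℝ) (γ : ℝ) (ρ0 : S → ℝ) (pol : S → A → ℝ) (s : S) : ℝ :=
  (1 - γ) * ∑' t : ℕ, γ ^ t * ∑ s0, ρ0 s0 * (transMat P pol ^ t) s0 s

/-- Value function of signal `F` under policy `pol`. -/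
noncomputable def Vfun {S A : Type*} [Fintype S] [DecidableEq S] [Fintype A]
    (P : S → A → S → ℝ) (γ : ℝ) (F : S → A → ℝ) (pol : S → A → ℝ) (s : S) : ℝ :=
  ∑' t : ℕ, γ ^ t * ∑ s', (transMat P pol ^ t) s s' * ∑ a, pol s' a * F s' a

/-- Return `J_F(pol) = ∑ s, ρ0 s * V_F^pol(s)`. -/
noncomputable def Jret {S A : Type*} [Fintype S] [DecidableEq S] [Fintype A]
    (P : S → A → S → ℝ) (γ : ℝ) (ρ0 : S → ℝ) (F : S → A → ℝ) (pol : S → A → ℝ) : ℝ :=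
  ∑ s, ρ0 s * Vfun P γ F pol s

/-- Action-value function `Q_F^pol(s,a) = F s a + γ ∑_{s'} P s a s' * V_F^pol(s')`. -/
noncomputable def Qfun {S A : Type*} [Fintype S] [DecidableEq S] [Fintype A]
    (P : S → A → S → ℝ) (γ : ℝ) (F : S → A → ℝ) (pol : S → A → ℝ) (s : S) (a : A) : ℝ :=
  F s a + γ * ∑ s', P s a s' * Vfun P γ F pol s'

/-- Advantage function `A_F^pol(s,a) = Q_F^pol(s,a) - V_F^pol(s)`. -/
noncomputable def Adv {S A : Type*} [Fintype S] [DecidableEq S] [Fintype A]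
    (P : S → A → S → ℝ) (γ : ℝ) (F : S → A → ℝ) (pol : S → A → ℝ) (s : S) (a : A) : ℝ :=
  Qfun P γ F pol s a - Vfun P γ F pol s

/-- Expected surrogate advantage
`𝔸_F(pol,pol') = ∑ s, d_pol(s) ∑ a, pol' s a * A_F^pol(s,a)`. -/
noncomputable def surrAdv {S A : Type*} [Fintype S] [DecidableEq S] [Fintype A]
    (P : S → A → S → ℝ) (γ : ℝ) (ρ0 : S → ℝ) (F : S → A → ℝ)
    (pol pol' : S → A → ℝ) : ℝ :=
  ∑ s, dVisit P γ ρ0 pol s * ∑ a, pol' s a * Adv P γ F pol s a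

/-- `ε_F(pol,pol') = max_s |∑ a, pol' s a * A_F^pol(s,a)|`. -/
noncomputable def epsAdv {S A : Type*} [Fintype S] [DecidableEq S] [Fintype A] [Nonempty S]
    (P : S → A → S → ℝ) (γ : ℝ) (F : S → A → ℝ) (pol pol' : S → A → ℝ) : ℝ :=
  Finset.univ.sup' Finset.univ_nonempty fun s => |∑ a, pol' s a * Adv P γ F pol s a|

/-- Per-state KL divergence `KL(pol'‖pol)(s) = ∑ a, pol' s a * log (pol' s a / pol s a)`
(with the convention `0 * log 0 = 0`, automatic since `Real.log 0 = 0`). -/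
noncomputable def klState {S A : Type*} [Fintype A] (pol' pol : S → A → ℝ) (s : S) : ℝ :=
  ∑ a, pol' s a * Real.log (pol' s a / pol s a)

/-- Averaged KL divergence `D̄_KL(pol'‖pol) = ∑ s, d_pol(s) * KL(pol'‖pol)(s)`. -/
noncomputable def avgKL {S A : Type*} [Fintype S] [DecidableEq S] [Fintype A]
    (P : S → A → S → ℝ) (γ : ℝ) (ρ0 : S → ℝ) (pol' pol : S → A → ℝ) : ℝ :=
  ∑ s, dVisit P γ ρ0 pol s * klState pol' pol s

/-! By the performance difference lemma, `(1 - γ) (J_C(π') - J_C(π))` is the average of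
`∑ a, π' s a * A_C^π(s,a)` under `d_π'`. Replacing `d_π'` by `d_π` turns it into `𝔸_C(π,π') ≤ 1/t`,
at the cost of at most `‖d_π' - d_π‖₁ · ε_C(π,π')`. Since `d_π = (1 - γ) ρ0 + γ d_π P_π` for every
policy, `(1 - γ) ‖d_π' - d_π‖₁ ≤ γ ∑ s, d_π(s) ‖π'(s) - π(s)‖₁`, and by
Pinsker's inequality in each state and Jensen's inequality for `√` the right-hand side is at most
`γ √(2 D̄_KL(π'‖π)) ≤ γ √(2δ)`.

Pinsker's inequality itself follows from `3 (x - 1)² ≤ 2 (x + 2) (x log x - x + 1)` and the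
Cauchy–Schwarz inequality with the weights `(p + 2q) / 3`, which sum to one. -/

open Finset Matrix InformationTheory

namespace Real

lemma monotoneOn_add_one_mul_log_sub :
    MonotoneOn (fun x => (x + 1) * log x - 2 * (x - 1)) (Set.Ioi 0) := by
  have hderiv : ∀ x ∈ Set.Ioi (0 : ℝ),
      HasDerivAt (fun x => (x + 1) * log x - 2 * (x - 1)) (log x + x⁻¹ - 1) x := by
    intro x (hx : 0 < x)
    have : HasDerivAt (fun x => (x + 1) * log x - 2 * (x - 1))
        (1 * log x + (x + 1) * x⁻¹ - 2 * 1) x :=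
      (((hasDerivAt_id' x).add_const 1).mul (hasDerivAt_log hx.ne')).sub
        (((hasDerivAt_id' x).sub_const 1).const_mul 2)
    exact this.congr_deriv (by field_simp [hx.ne']; ring)
  refine monotoneOn_of_hasDerivWithinAt_nonneg (convex_Ioi 0) (f' := fun x => log x + x⁻¹ - 1)
    (fun x hx => (hderiv x hx).continuousAt.continuousWithinAt) (fun x hx => ?_) (fun x hx => ?_)
  · rw [interior_Ioi] at hx
    exact (hderiv x hx).hasDerivWithinAt
  · rw [interior_Ioi] at hx
    linarith [one_sub_inv_le_log_of_pos hx]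

lemma add_one_mul_log_le_two_mul_sub_one {x : ℝ} (hx0 : 0 < x) (hx1 : x ≤ 1) :
    (x + 1) * log x ≤ 2 * (x - 1) := by
  have := monotoneOn_add_one_mul_log_sub hx0 (show (1 : ℝ) ∈ Set.Ioi 0 by simp) hx1
  norm_num at this
  linarith

lemma two_mul_sub_one_le_add_one_mul_log {x : ℝ} (hx : 1 ≤ x) :
    2 * (x - 1) ≤ (x + 1) * log x := by
  have := monotoneOn_add_one_mul_log_sub (show (1 : ℝ) ∈ Set.Ioi 0 by simp)
    (show x ∈ Set.Ioi 0 from zero_lt_one.trans_le hx) hx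
  norm_num at this
  linarith

end Real

namespace InformationTheory

lemma three_mul_sub_one_sq_le_klFun {x : ℝ} (hx : 0 ≤ x) :
    3 * (x - 1) ^ 2 ≤ 2 * (x + 2) * klFun x := by
  set h : ℝ → ℝ := fun x => 2 * (x + 2) * klFun x - 3 * (x - 1) ^ 2
  set h' : ℝ → ℝ := fun y => 4 * ((y + 1) * log y - 2 * (y - 1))
  have hcont : Continuous h := by
    have := continuous_klFun
    fun_prop
  have hderiv : ∀ y, 0 < y → HasDerivAt h (h' y) y := by
    intro y hy
    have : HasDerivAt h (2 * 1 * klFun y + 2 * (y + 2) * log y - 3 * (2 * (y - 1) ^ 1 * 1)) y :=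
      ((((hasDerivAt_id' y).add_const 2).const_mul 2).mul (hasDerivAt_klFun hy.ne')).sub
        ((((hasDerivAt_id' y).sub_const 1).pow 2).const_mul 3)
    exact this.congr_deriv (by simp only [h', klFun_apply]; ring)
  suffices 0 ≤ h x by simp only [h] at this; linarith
  have h1 : h 1 = 0 := by simp [h, klFun_one]
  rcases le_total x 1 with hx1 | hx1
  · have : AntitoneOn h (Set.Icc 0 1) := by
      refine antitoneOn_of_hasDerivWithinAt_nonpos (convex_Icc 0 1) hcont.continuousOn
        (fun y hy => ?_) (fun y hy => ?_) (f' := h')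
      · rw [interior_Icc] at hy
        exact (hderiv y hy.1).hasDerivWithinAt
      · rw [interior_Icc] at hy
        simp only [h']
        linarith [Real.add_one_mul_log_le_two_mul_sub_one hy.1 hy.2.le]
    simpa [h1] using this ⟨hx, hx1⟩ ⟨zero_le_one, le_rfl⟩ hx1
  · have : MonotoneOn h (Set.Ici 1) := by
      refine monotoneOn_of_hasDerivWithinAt_nonneg (convex_Ici 1) hcont.continuousOn
        (fun y hy => ?_) (fun y hy => ?_) (f' := h')
      · rw [interior_Ici] at hy
        exact (hderiv y (zero_lt_one.trans hy)).hasDerivWithinAt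
      · rw [interior_Ici] at hy
        simp only [h']
        linarith [Real.two_mul_sub_one_le_add_one_mul_log hy.le]
    simpa [h1] using this Set.self_mem_Ici hx1 hx1

lemma mul_log_div_sub_add_eq_mul_klFun {p q : ℝ} (hpq : q = 0 → p = 0) :
    p * log (p / q) - p + q = q * klFun (p / q) := by
  rcases eq_or_ne q 0 with hq | hq
  · simp [hq, hpq hq]
  · rw [klFun_apply]
    field_simp
    ring

/-- **Pinsker's inequality**. -/
theorem sq_sum_abs_sub_le_two_mul_sum_mul_log {ι : Type*} [Fintype ι] {p q : ι → ℝ}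
    (hp : ∀ i, 0 ≤ p i) (hq : ∀ i, 0 ≤ q i) (hp1 : ∑ i, p i = 1) (hq1 : ∑ i, q i = 1)
    (hpq : ∀ i, q i = 0 → p i = 0) :
    (∑ i, |p i - q i|) ^ 2 ≤ 2 * ∑ i, p i * log (p i / q i) := by
  have hf : ∀ i, 2 * (p i * log (p i / q i) - p i + q i) = 2 * q i * klFun (p i / q i) := by
    intro i
    rw [mul_log_div_sub_add_eq_mul_klFun (hpq i), mul_assoc]
  calc (∑ i, |p i - q i|) ^ 2
      ≤ (∑ i, 2 * (p i * log (p i / q i) - p i + q i)) * ∑ i, (p i + 2 * q i) / 3 := by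
        refine sum_sq_le_sum_mul_sum_of_sq_le_mul _ (fun i _ => ?_) (fun i _ => ?_) (fun i _ => ?_)
        · rw [hf]
          exact mul_nonneg (by linarith [hq i]) (klFun_nonneg (div_nonneg (hp i) (hq i)))
        · linarith [hp i, hq i]
        · rw [hf, sq_abs]
          rcases (hq i).eq_or_lt with hqi | hqi
          · simp [← hqi, hpq i hqi.symm]
          · have hx := three_mul_sub_one_sq_le_klFun (div_nonneg (hp i) hqi.le)
            calc (p i - q i) ^ 2 = q i ^ 2 * (p i / q i - 1) ^ 2 := by field_simp
              _ ≤ q i ^ 2 * (2 * (p i / q i + 2) * klFun (p i / q i) / 3) := by gcongr; linarith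
              _ = 2 * q i * klFun (p i / q i) * ((p i + 2 * q i) / 3) := by field_simp
    _ = 2 * ∑ i, p i * log (p i / q i) := by
        simp only [← sum_div, ← mul_sum, sum_add_distrib, sum_sub_distrib, hp1, hq1]
        ring

end InformationTheory

lemma Matrix.sum_abs_vecMul_le {m n : Type*} [Fintype m] [Fintype n] (u : m → ℝ)
    (N : Matrix m n ℝ) : ∑ j, |(u ᵥ* N) j| ≤ ∑ i, |u i| * ∑ j, |N i j| := by
  calc ∑ j, |(u ᵥ* N) j| ≤ ∑ j, ∑ i, |u i| * |N i j| :=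
        sum_le_sum fun j _ => (abs_sum_le_sum_abs _ _).trans_eq (by simp [abs_mul])
    _ = ∑ i, |u i| * ∑ j, |N i j| := by rw [sum_comm]; simp [mul_sum]

lemma Matrix.sum_abs_vecMul_le_of_row_sum_eq_one {m n : Type*} [Fintype m] [Fintype n]
    (u : m → ℝ) {N : Matrix m n ℝ} (hN0 : ∀ i j, 0 ≤ N i j) (hN1 : ∀ i, ∑ j, N i j = 1) :
    ∑ j, |(u ᵥ* N) j| ≤ ∑ i, |u i| :=
  (sum_abs_vecMul_le u N).trans_eq <| sum_congr rfl fun i _ => by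
    simp [abs_of_nonneg (hN0 i _), hN1]

lemma dotProduct_le_sum_abs_mul {n : Type*} [Fintype n] (u : n → ℝ) {f : n → ℝ} {ε : ℝ}
    (hf : ∀ i, |f i| ≤ ε) : u ⬝ᵥ f ≤ (∑ i, |u i|) * ε := by
  rw [dotProduct, sum_mul]
  exact sum_le_sum fun i _ => (le_abs_self _).trans <| by
    rw [abs_mul]; exact mul_le_mul_of_nonneg_left (hf i) (abs_nonneg _)

section DiscountedOccupancy

variable {n : Type*} [Fintype n] [DecidableEq n] {M : Matrix n n ℝ} {γ : ℝ}

noncomputable def discountedOccupancy (γ : ℝ) (M : Matrix n n ℝ) : Matrix n n ℝ :=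
  fun i j => ∑' t : ℕ, γ ^ t * (M ^ t) i j

lemma summable_geometric_mul_pow_apply (hM : M ∈ rowStochastic ℝ n) (hγ0 : 0 ≤ γ)
    (hγ1 : γ < 1) (i j : n) : Summable fun t : ℕ => γ ^ t * (M ^ t) i j := by
  refine (summable_geometric_of_lt_one hγ0 hγ1).of_nonneg_of_le
    (fun t => mul_nonneg (pow_nonneg hγ0 t) (nonneg_of_mem_rowStochastic (pow_mem hM t)))
    (fun t => mul_le_of_le_one_right (pow_nonneg hγ0 t)
      (le_one_of_mem_rowStochastic (pow_mem hM t)))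

lemma discountedOccupancy_nonneg (hM : M ∈ rowStochastic ℝ n) (hγ0 : 0 ≤ γ) (i j : n) :
    0 ≤ discountedOccupancy γ M i j :=
  tsum_nonneg fun t => mul_nonneg (pow_nonneg hγ0 t) (nonneg_of_mem_rowStochastic (pow_mem hM t))

lemma vecMul_discountedOccupancy (hM : M ∈ rowStochastic ℝ n) (hγ0 : 0 ≤ γ) (hγ1 : γ < 1)
    (v : n → ℝ) (j : n) :
    (v ᵥ* discountedOccupancy γ M) j = ∑' t : ℕ, γ ^ t * (v ᵥ* M ^ t) j := by
  simp only [vecMul, dotProduct, discountedOccupancy, ← tsum_mul_left]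
  rw [← Summable.tsum_finsetSum fun i _ =>
    (summable_geometric_mul_pow_apply hM hγ0 hγ1 i j).mul_left _]
  exact tsum_congr fun t => by rw [mul_sum]; exact sum_congr rfl fun i _ => by ring

lemma discountedOccupancy_mulVec (hM : M ∈ rowStochastic ℝ n) (hγ0 : 0 ≤ γ) (hγ1 : γ < 1)
    (r : n → ℝ) (i : n) :
    (discountedOccupancy γ M *ᵥ r) i = ∑' t : ℕ, γ ^ t * (M ^ t *ᵥ r) i := by
  simp only [mulVec, dotProduct, discountedOccupancy, ← tsum_mul_right]
  rw [← Summable.tsum_finsetSum fun j _ =>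
    (summable_geometric_mul_pow_apply hM hγ0 hγ1 i j).mul_right _]
  exact tsum_congr fun t => by rw [mul_sum]; exact sum_congr rfl fun j _ => by ring

lemma discountedOccupancy_mulVec_one (hM : M ∈ rowStochastic ℝ n) (hγ0 : 0 ≤ γ) (hγ1 : γ < 1) :
    discountedOccupancy γ M *ᵥ 1 = fun _ => (1 - γ)⁻¹ := by
  ext i
  rw [discountedOccupancy_mulVec hM hγ0 hγ1, ← tsum_geometric_of_lt_one hγ0 hγ1]
  exact tsum_congr fun t => by
    rw [one_vecMul_of_mem_rowStochastic (pow_mem hM t), Pi.one_apply, mul_one]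

lemma discountedOccupancy_eq_one_add (hM : M ∈ rowStochastic ℝ n) (hγ0 : 0 ≤ γ) (hγ1 : γ < 1) :
    discountedOccupancy γ M = 1 + γ • (discountedOccupancy γ M * M) := by
  ext i j
  have hs := summable_geometric_mul_pow_apply hM hγ0 hγ1
  rw [Matrix.add_apply, Matrix.smul_apply, mul_apply, discountedOccupancy,
    (hs i j).tsum_eq_zero_add]
  simp only [pow_zero, one_mul, smul_eq_mul, discountedOccupancy, ← tsum_mul_right]
  rw [← Summable.tsum_finsetSum fun k _ => (hs i k).mul_right _, ← tsum_mul_left]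
  refine congrArg _ (tsum_congr fun t => ?_)
  rw [pow_succ, pow_succ M, mul_apply, mul_sum, mul_sum]
  exact sum_congr rfl fun k _ => by ring

end DiscountedOccupancy

lemma transMat_sub {S A : Type*} [Fintype A] (P : S → A → S → ℝ) (pol pol' : S → A → ℝ) :
    transMat P pol' - transMat P pol = transMat P (pol' - pol) := by
  ext s s'
  simp [transMat, sub_mul]

lemma sum_abs_transMat_le {S A : Type*} [Fintype S] [Fintype A] {P : S → A → S → ℝ}
    (hP0 : ∀ s a s', 0 ≤ P s a s') (hP1 : ∀ s a, ∑ s', P s a s' = 1) (f : S → A → ℝ) (s : S) :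
    ∑ s', |transMat P f s s'| ≤ ∑ a, |f s a| :=
  sum_abs_vecMul_le_of_row_sum_eq_one (f s) (hP0 s) (hP1 s)

lemma sum_abs_sub_le_sqrt_klState {S A : Type*} [Fintype A] {pol pol' : S → A → ℝ}
    (hpol0 : ∀ s a, 0 ≤ pol s a) (hpol1 : ∀ s, ∑ a, pol s a = 1)
    (hpol'0 : ∀ s a, 0 ≤ pol' s a) (hpol'1 : ∀ s, ∑ a, pol' s a = 1)
    (habs : ∀ s a, pol s a = 0 → pol' s a = 0) (s : S) :
    ∑ a, |pol' s a - pol s a| ≤ √(2 * klState pol' pol s) :=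
  Real.le_sqrt_of_sq_le <| InformationTheory.sq_sum_abs_sub_le_two_mul_sum_mul_log
    (hpol'0 s) (hpol0 s) (hpol'1 s) (hpol1 s) (habs s)

section MDP

variable {S A : Type*} [Fintype S] [DecidableEq S] [Fintype A]
  {P : S → A → S → ℝ} {γ : ℝ} {ρ0 : S → ℝ} {pol pol' : S → A → ℝ}

def actionAvg (pol F : S → A → ℝ) (s : S) : ℝ := ∑ a, pol s a * F s a

lemma transMat_mem_rowStochastic (hP0 : ∀ s a s', 0 ≤ P s a s') (hP1 : ∀ s a, ∑ s', P s a s' = 1)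
    (hpol0 : ∀ s a, 0 ≤ pol s a) (hpol1 : ∀ s, ∑ a, pol s a = 1) :
    transMat P pol ∈ rowStochastic ℝ S := by
  refine mem_rowStochastic_iff_sum.2 ⟨fun s s' => sum_nonneg fun a _ =>
    mul_nonneg (hpol0 s a) (hP0 s a s'), fun s => ?_⟩
  simp only [transMat]
  rw [sum_comm]
  simp [← mul_sum, hP1, hpol1]

variable (hM : transMat P pol ∈ rowStochastic ℝ S) (hγ0 : 0 ≤ γ) (hγ1 : γ < 1)
include hM hγ0 hγ1

lemma dVisit_eq_smul_vecMul :
    dVisit P γ ρ0 pol = (1 - γ) • (ρ0 ᵥ* discountedOccupancy γ (transMat P pol)) := by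
  ext s
  rw [dVisit, Pi.smul_apply, vecMul_discountedOccupancy hM hγ0 hγ1, smul_eq_mul]
  rfl

lemma Vfun_eq_mulVec (F : S → A → ℝ) :
    Vfun P γ F pol = discountedOccupancy γ (transMat P pol) *ᵥ actionAvg pol F := by
  ext s
  rw [Vfun, discountedOccupancy_mulVec hM hγ0 hγ1]
  rfl

lemma dVisit_nonneg (hρ0 : ∀ s, 0 ≤ ρ0 s) (s : S) : 0 ≤ dVisit P γ ρ0 pol s := by
  rw [dVisit_eq_smul_vecMul hM hγ0 hγ1]
  exact mul_nonneg (by linarith) (sum_nonneg fun s0 _ =>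
    mul_nonneg (hρ0 s0) (discountedOccupancy_nonneg hM hγ0 s0 s))

lemma sum_dVisit (hρ1 : ∑ s, ρ0 s = 1) : ∑ s, dVisit P γ ρ0 pol s = 1 := by
  have h1γ : 1 - γ ≠ 0 := by linarith
  calc ∑ s, dVisit P γ ρ0 pol s
      = (1 - γ) * (ρ0 ⬝ᵥ (discountedOccupancy γ (transMat P pol) *ᵥ 1)) := by
        rw [dVisit_eq_smul_vecMul hM hγ0 hγ1, ← dotProduct_one, smul_dotProduct, smul_eq_mul,
          dotProduct_mulVec]
    _ = 1 := by
        rw [discountedOccupancy_mulVec_one hM hγ0 hγ1, dotProduct, ← sum_mul, hρ1, one_mul,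
          mul_inv_cancel₀ h1γ]

lemma dVisit_eq_add :
    dVisit P γ ρ0 pol = (1 - γ) • ρ0 + γ • (dVisit P γ ρ0 pol ᵥ* transMat P pol) := by
  conv_lhs => rw [dVisit_eq_smul_vecMul hM hγ0 hγ1, discountedOccupancy_eq_one_add hM hγ0 hγ1]
  rw [dVisit_eq_smul_vecMul hM hγ0 hγ1, vecMul_add, vecMul_one, vecMul_smul, ← vecMul_vecMul,
    smul_add, smul_vecMul, smul_comm]

lemma dVisit_dotProduct_actionAvg (F : S → A → ℝ) :
    dVisit P γ ρ0 pol ⬝ᵥ actionAvg pol F = (1 - γ) * Jret P γ ρ0 F pol := by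
  rw [dVisit_eq_smul_vecMul hM hγ0 hγ1, smul_dotProduct, ← dotProduct_mulVec,
    ← Vfun_eq_mulVec hM hγ0 hγ1, smul_eq_mul]
  rfl

lemma dVisit_dotProduct_bellman_residual (V : S → ℝ) :
    dVisit P γ ρ0 pol ⬝ᵥ (γ • (transMat P pol *ᵥ V) - V) = -((1 - γ) * (ρ0 ⬝ᵥ V)) := by
  have h := congrArg (· ⬝ᵥ V) (dVisit_eq_add hM hγ0 hγ1 (ρ0 := ρ0))
  simp only [add_dotProduct, smul_dotProduct, smul_eq_mul] at h
  rw [dotProduct_sub, dotProduct_smul, dotProduct_mulVec, smul_eq_mul]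
  linarith

end MDP

section TwoPolicies

variable {S A : Type*} [Fintype S] [DecidableEq S] [Fintype A]
  {P : S → A → S → ℝ} {γ : ℝ} {ρ0 : S → ℝ} {pol pol' : S → A → ℝ}

lemma actionAvg_adv (hpol'1 : ∀ s, ∑ a, pol' s a = 1) (F : S → A → ℝ) :
    actionAvg pol' (Adv P γ F pol) = actionAvg pol' F
      + (γ • (transMat P pol' *ᵥ Vfun P γ F pol) - Vfun P γ F pol) := by
  ext s
  have hV : ∑ a, pol' s a * Vfun P γ F pol s = Vfun P γ F pol s := by
    rw [← sum_mul, hpol'1, one_mul]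
  have hPV : ∑ a, pol' s a * (γ * ∑ s', P s a s' * Vfun P γ F pol s')
      = γ * (transMat P pol' *ᵥ Vfun P γ F pol) s := by
    simp only [mulVec, dotProduct, transMat, mul_sum, sum_mul]
    rw [sum_comm]
    exact sum_congr rfl fun s' _ => sum_congr rfl fun a _ => by ring
  simp only [actionAvg, Adv, Qfun, mul_sub, mul_add, sum_sub_distrib, sum_add_distrib]
  rw [hV, hPV]
  simp only [actionAvg, Pi.add_apply, Pi.sub_apply, Pi.smul_apply, smul_eq_mul]
  ring

theorem performance_difference (hM' : transMat P pol' ∈ rowStochastic ℝ S)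
    (hpol'1 : ∀ s, ∑ a, pol' s a = 1) (hγ0 : 0 ≤ γ) (hγ1 : γ < 1) (F : S → A → ℝ) :
    (1 - γ) * (Jret P γ ρ0 F pol' - Jret P γ ρ0 F pol)
      = dVisit P γ ρ0 pol' ⬝ᵥ actionAvg pol' (Adv P γ F pol) := by
  rw [actionAvg_adv hpol'1, dotProduct_add, dVisit_dotProduct_actionAvg hM' hγ0 hγ1,
    dVisit_dotProduct_bellman_residual hM' hγ0 hγ1]
  simp only [Jret, dotProduct]
  ring

lemma dVisit_sub_dVisit (hM : transMat P pol ∈ rowStochastic ℝ S)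
    (hM' : transMat P pol' ∈ rowStochastic ℝ S) (hγ0 : 0 ≤ γ) (hγ1 : γ < 1) :
    dVisit P γ ρ0 pol' - dVisit P γ ρ0 pol
      = γ • ((dVisit P γ ρ0 pol' - dVisit P γ ρ0 pol) ᵥ* transMat P pol'
        + dVisit P γ ρ0 pol ᵥ* transMat P (pol' - pol)) := by
  conv_lhs => rw [dVisit_eq_add hM' hγ0 hγ1, dVisit_eq_add hM hγ0 hγ1]
  rw [← transMat_sub, sub_vecMul, vecMul_sub]
  module

lemma sum_abs_dVisit_sub_le (hP0 : ∀ s a s', 0 ≤ P s a s') (hP1 : ∀ s a, ∑ s', P s a s' = 1)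
    (hM : transMat P pol ∈ rowStochastic ℝ S) (hM' : transMat P pol' ∈ rowStochastic ℝ S)
    (hγ0 : 0 ≤ γ) (hγ1 : γ < 1) (hρ0 : ∀ s, 0 ≤ ρ0 s) :
    (1 - γ) * ∑ s, |dVisit P γ ρ0 pol' s - dVisit P γ ρ0 pol s|
      ≤ γ * ∑ s, dVisit P γ ρ0 pol s * ∑ a, |pol' s a - pol s a| := by
  have hflow := dVisit_sub_dVisit hM hM' hγ0 hγ1 (ρ0 := ρ0)
  set d := dVisit P γ ρ0 pol
  set d' := dVisit P γ ρ0 pol'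
  have hstep : ∑ s, |(d' - d) s| ≤ γ * (∑ s, |(d' - d) s|
      + ∑ s, d s * ∑ a, |pol' s a - pol s a|) := by
    calc ∑ s, |(d' - d) s|
        ≤ γ * (∑ s, |((d' - d) ᵥ* transMat P pol') s|
          + ∑ s, |(d ᵥ* transMat P (pol' - pol)) s|) := by
          conv_lhs => rw [hflow]
          simp only [Pi.smul_apply, Pi.add_apply, smul_eq_mul, abs_mul, abs_of_nonneg hγ0,
            ← mul_sum, ← sum_add_distrib]
          gcongr
          exact abs_add_le _ _
      _ ≤ γ * (∑ s, |(d' - d) s| + ∑ s, d s * ∑ a, |pol' s a - pol s a|) := by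
          refine mul_le_mul_of_nonneg_left (add_le_add ?_ ?_) hγ0
          · exact sum_abs_vecMul_le_of_row_sum_eq_one _
              (fun _ _ => nonneg_of_mem_rowStochastic hM') (sum_row_of_mem_rowStochastic hM')
          · refine (sum_abs_vecMul_le _ _).trans (sum_le_sum fun s _ => ?_)
            rw [abs_of_nonneg (dVisit_nonneg hM hγ0 hγ1 hρ0 s)]
            exact mul_le_mul_of_nonneg_left (sum_abs_transMat_le hP0 hP1 _ s)
              (dVisit_nonneg hM hγ0 hγ1 hρ0 s)
  simp only [Pi.sub_apply] at hstep
  linarith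

lemma sum_dVisit_mul_sum_abs_sub_le (hM : transMat P pol ∈ rowStochastic ℝ S)
    (hγ0 : 0 ≤ γ) (hγ1 : γ < 1) (hρ0 : ∀ s, 0 ≤ ρ0 s) (hρ1 : ∑ s, ρ0 s = 1)
    (hpol0 : ∀ s a, 0 ≤ pol s a) (hpol1 : ∀ s, ∑ a, pol s a = 1)
    (hpol'0 : ∀ s a, 0 ≤ pol' s a) (hpol'1 : ∀ s, ∑ a, pol' s a = 1)
    (habs : ∀ s a, pol s a = 0 → pol' s a = 0) :
    ∑ s, dVisit P γ ρ0 pol s * ∑ a, |pol' s a - pol s a| ≤ √(2 * avgKL P γ ρ0 pol' pol) := by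
  have hd0 := dVisit_nonneg hM hγ0 hγ1 hρ0
  have hkl : ∀ s, 0 ≤ 2 * klState pol' pol s := fun s =>
    (sq_nonneg _).trans (InformationTheory.sq_sum_abs_sub_le_two_mul_sum_mul_log
      (hpol'0 s) (hpol0 s) (hpol'1 s) (hpol1 s) (habs s))
  calc ∑ s, dVisit P γ ρ0 pol s * ∑ a, |pol' s a - pol s a|
      ≤ ∑ s, dVisit P γ ρ0 pol s * √(2 * klState pol' pol s) := by
        gcongr with s
        · exact hd0 s
        · exact sum_abs_sub_le_sqrt_klState hpol0 hpol1 hpol'0 hpol'1 habs s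
    _ ≤ √(∑ s, dVisit P γ ρ0 pol s * (2 * klState pol' pol s)) :=
        Real.strictConcaveOn_sqrt.concaveOn.le_map_sum (fun s _ => hd0 s)
          (sum_dVisit hM hγ0 hγ1 hρ1) (fun s _ => hkl s)
    _ = √(2 * avgKL P γ ρ0 pol' pol) := by
        rw [avgKL, mul_sum]
        exact congrArg _ (sum_congr rfl fun s _ => by ring)

end TwoPolicies

theorem interior_point_cost_step_bound_general {S A : Type*} [Fintype S] [DecidableEq S] [Fintype A] [Nonempty S]
    (P : S → A → S → ℝ) (hP0 : ∀ s a s', 0 ≤ P s a s') (hP1 : ∀ s a, ∑ s', P s a s' = 1)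
    (γ : ℝ) (hγ0 : 0 < γ) (hγ1 : γ < 1)
    (ρ0 : S → ℝ) (hρ0 : ∀ s, 0 ≤ ρ0 s) (hρ1 : ∑ s, ρ0 s = 1)
    (δ : ℝ) (t : ℝ) (C : S → A → ℝ)
    (pol : S → A → ℝ) (hpol0 : ∀ s a, 0 ≤ pol s a) (hpol1 : ∀ s, ∑ a, pol s a = 1) (pol' : S → A → ℝ) (hpol'0 : ∀ s a, 0 ≤ pol' s a) (hpol'1 : ∀ s, ∑ a, pol' s a = 1)
    (habs : ∀ s a, pol s a = 0 → pol' s a = 0)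
    (hKL : avgKL P γ ρ0 pol' pol ≤ δ)
    (hA : surrAdv P γ ρ0 C pol pol' ≤ 1 / t) :
    Jret P γ ρ0 C pol' - Jret P γ ρ0 C pol ≤
      1 / ((1 - γ) * t) + Real.sqrt (2 * δ) * γ * epsAdv P γ C pol pol' / (1 - γ) ^ 2 := by
  have hM := transMat_mem_rowStochastic hP0 hP1 hpol0 hpol1
  have hM' := transMat_mem_rowStochastic hP0 hP1 hpol'0 hpol'1
  set ε := epsAdv P γ C pol pol'
  set adv := actionAvg pol' (Adv P γ C pol)
  set tv := ∑ s, |dVisit P γ ρ0 pol' s - dVisit P γ ρ0 pol s|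
  have hadv : ∀ s, |adv s| ≤ ε := fun s => le_sup' (fun s => |adv s|) (mem_univ s)
  have hε : 0 ≤ ε := (abs_nonneg _).trans (hadv (Classical.arbitrary S))
  have hperf : (1 - γ) * (Jret P γ ρ0 C pol' - Jret P γ ρ0 C pol) ≤ 1 / t + tv * ε := by
    rw [performance_difference hM' hpol'1 hγ0.le hγ1,
      ← add_sub_cancel (dVisit P γ ρ0 pol) (dVisit P γ ρ0 pol'), add_dotProduct]
    exact add_le_add hA (dotProduct_le_sum_abs_mul _ hadv)
  have htv : (1 - γ) * tv ≤ γ * √(2 * δ) :=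
    (sum_abs_dVisit_sub_le hP0 hP1 hM hM' hγ0.le hγ1 hρ0).trans <|
      mul_le_mul_of_nonneg_left ((sum_dVisit_mul_sum_abs_sub_le hM hγ0.le hγ1 hρ0 hρ1 hpol0 hpol1
        hpol'0 hpol'1 habs).trans (Real.sqrt_le_sqrt (by linarith))) hγ0.le
  have h1γ : 0 < 1 - γ := by linarith
  have htv' : tv * ε ≤ γ * √(2 * δ) / (1 - γ) * ε :=
    mul_le_mul_of_nonneg_right ((le_div_iff₀' h1γ).2 htv) hε
  calc Jret P γ ρ0 C pol' - Jret P γ ρ0 C pol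
      ≤ (1 / t + γ * √(2 * δ) / (1 - γ) * ε) / (1 - γ) := (le_div_iff₀' h1γ).2 (by linarith)
    _ = 1 / ((1 - γ) * t) + √(2 * δ) * γ * ε / (1 - γ) ^ 2 := by
        rw [add_div, div_div, mul_comm t]
        field_simp

/-- per-step interior-point cost update bound. -/
theorem interior_point_cost_step_bound {S A : Type*} [Fintype S] [DecidableEq S] [Fintype A] [Nonempty S] [Nonempty A]
    (P : S → A → S → ℝ) (hP0 : ∀ s a s', 0 ≤ P s a s') (hP1 : ∀ s a, ∑ s', P s a s' = 1)
    (γ : ℝ) (hγ0 : 0 < γ) (hγ1 : γ < 1)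
    (ρ0 : S → ℝ) (hρ0 : ∀ s, 0 ≤ ρ0 s) (hρ1 : ∑ s, ρ0 s = 1)
    (δ : ℝ) (hδ : 0 < δ) (t : ℝ) (ht : 0 < t) (C : S → A → ℝ)
    (pol : S → A → ℝ) (hpol0 : ∀ s a, 0 ≤ pol s a) (hpol1 : ∀ s, ∑ a, pol s a = 1) (pol' : S → A → ℝ) (hpol'0 : ∀ s a, 0 ≤ pol' s a) (hpol'1 : ∀ s, ∑ a, pol' s a = 1)
    (habs : ∀ s a, pol s a = 0 → pol' s a = 0)
    (hKL : avgKL P γ ρ0 pol' pol ≤ δ)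
    (hA : surrAdv P γ ρ0 C pol pol' ≤ 1 / t) :
    Jret P γ ρ0 C pol' - Jret P γ ρ0 C pol ≤
      1 / ((1 - γ) * t) + Real.sqrt (2 * δ) * γ * epsAdv P γ C pol pol' / (1 - γ) ^ 2 :=
  interior_point_cost_step_bound_general P hP0 hP1 γ hγ0 hγ1 ρ0 hρ0 hρ1 δ t C pol hpol0 hpol1 pol'
    hpol'0 hpol'1 habs hKL hA
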